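/- arXiv:2203.10371 — 2 statements merged into one kernel-verified Lean document; each statement's English description precedes it below -/
import Mathlib

section
/- Let M be a connected smooth n-dimensional manifold and let S ⊆ M be a finite set of points. Then there exists a compact set B ⊆ M that is diffeomorphic to the closed unit ball in ℝⁿ and whose interior contains S. -/
open Metric
open scoped Manifold

noncomputable section

open Function Set Filter
open scoped Topology NNReal ContDiff

/-! A point of a manifold can be pushed to any nearby point by a diffeomorphism supported in a
small chart ball: in the chart it is `x ↦ x + ρ x • (b - a)` for a bump function `ρ`, a small
Lipschitz perturbation of the identity. Hence, for finite `T`, whether `insert x T` lies in an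
open cell (a diffeomorphic image of the model space) is locally constant in `x`, so on a connected
manifold every finite set lies in one cell. Rescaling the cell until the finite set sits over the
open unit ball, `B` is the image of the closed unit ball. -/

theorem isUnit_one_add_of_norm_lt_one {R : Type*} [NormedRing R] [HasSummableGeomSeries R]
    {x : R} (hx : ‖x‖ < 1) : IsUnit (1 + x) := by
  simpa using isUnit_one_sub_of_norm_lt_one (x := -x) (by rwa [norm_neg])

theorem exists_diffeomorph_coe_eq_add_smul {E : Type*} [NormedAddCommGroup E]
    [NormedSpace ℝ E] [CompleteSpace E] {φ : E → ℝ} {K : ℝ≥0} (hφ : ContDiff ℝ ∞ φ)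
    (hK : LipschitzWith K φ) {c : E} (hc : ‖c‖₊ * K < 1) :
    ∃ f : E ≃ₘ[ℝ] E, ⇑f = fun x => x + φ x • c := by
  set f : E → E := fun x => x + φ x • c
  have hf : ContDiff ℝ ∞ f := contDiff_id.add (hφ.smul contDiff_const)
  have hlip : LipschitzWith (‖c‖₊ * K) (fun x => φ x • c) := by
    simpa [Function.comp_def] using (ContinuousLinearMap.toSpanSingleton ℝ c).lipschitz.comp hK
  have happrox : ApproximatesLinearOn f (ContinuousLinearEquiv.refl ℝ E : E →L[ℝ] E) univ
      (‖c‖₊ * K) :=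
    LipschitzOnWith.approximatesLinearOn (by simpa [f, Pi.sub_def] using hlip)
  have hsmall : Subsingleton E ∨ ‖c‖₊ * K <
      ‖((ContinuousLinearEquiv.refl ℝ E).symm : E →L[ℝ] E)‖₊⁻¹ := by
    rcases subsingleton_or_nontrivial E with hE | hE
    · exact .inl hE
    · simpa using .inr hc
  set h := happrox.toHomeomorph f hsmall
  have hderiv : ∀ x, ∃ A : E ≃L[ℝ] E, HasFDerivAt f (A : E →L[ℝ] E) x := by
    intro x
    have hB : ‖(fderiv ℝ φ x).smulRight c‖ < 1 := by
      rw [ContinuousLinearMap.norm_smulRight_apply, mul_comm]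
      calc ‖c‖ * ‖fderiv ℝ φ x‖ ≤ ‖c‖ * K :=
            mul_le_mul_of_nonneg_left (norm_fderiv_le_of_lipschitz ℝ hK) (norm_nonneg c)
        _ < 1 := by exact_mod_cast hc
    refine ⟨ContinuousLinearEquiv.unitsEquiv ℝ E (isUnit_one_add_of_norm_lt_one hB).unit, ?_⟩
    exact (hasFDerivAt_id x).add ((hφ.differentiable (by simp) x).hasFDerivAt.smul_const c)
  choose A hA using hderiv
  exact ⟨{ toEquiv := h.toEquiv
           contMDiff_toFun := hf.contMDiff
           contMDiff_invFun := (h.contDiff_symm hA hf).contMDiff }, rfl⟩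

theorem Function.Injective.mapsTo_of_eqOn_compl {α : Type*} {f : α → α} {K t : Set α}
    (hf : Injective f) (hKt : K ⊆ t) (hfK : EqOn f id Kᶜ) : MapsTo f t t := by
  intro z hz
  by_cases hzK : z ∈ K
  · by_contra hfz
    have hfixed : f z = z := hf (hfK fun h => hfz (hKt h))
    exact hfz (hKt (by rwa [hfixed]))
  · exact (hfK hzK).symm ▸ hz

namespace OpenPartialHomeomorph

variable {M E : Type*} [TopologicalSpace M] [TopologicalSpace E] (e : OpenPartialHomeomorph M E)

open scoped Classical in
def conjExtend (f : E → E) : M → M :=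
  e.source.piecewise (e.symm ∘ f ∘ e) id

variable {e}

theorem conjExtend_of_mem {f : E → E} {x : M} (hx : x ∈ e.source) :
    e.conjExtend f x = e.symm (f (e x)) :=
  if_pos hx

theorem conjExtend_of_notMem {f : E → E} {x : M} (hx : x ∉ e.source) :
    e.conjExtend f x = x :=
  if_neg hx

theorem eqOn_conjExtend_compl {f : E → E} {K : Set E} (hfK : EqOn f id Kᶜ) :
    EqOn (e.conjExtend f) id (e.symm '' K)ᶜ := by
  intro x hx
  by_cases hxs : x ∈ e.source
  · have hxK : e x ∉ K := fun h => hx ⟨e x, h, e.left_inv hxs⟩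
    rw [conjExtend_of_mem hxs, hfK hxK, id, e.left_inv hxs, id]
  · exact conjExtend_of_notMem hxs

theorem leftInverse_conjExtend {f g : E → E} (hgf : LeftInverse g f)
    (hf : MapsTo f e.target e.target) : LeftInverse (e.conjExtend g) (e.conjExtend f) := by
  intro x
  by_cases hx : x ∈ e.source
  · have hfx : f (e x) ∈ e.target := hf (e.map_source hx)
    rw [conjExtend_of_mem hx, conjExtend_of_mem (e.map_target hfx), e.right_inv hfx, hgf,
      e.left_inv hx]
  · rw [conjExtend_of_notMem hx, conjExtend_of_notMem hx]

end OpenPartialHomeomorph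

section

open OpenPartialHomeomorph

variable {E : Type*} [NormedAddCommGroup E] [NormedSpace ℝ E]
  {M : Type*} [TopologicalSpace M] [ChartedSpace E M]

theorem contMDiff_conjExtend [T2Space M] {e : OpenPartialHomeomorph M E}
    (he : e ∈ IsManifold.maximalAtlas 𝓘(ℝ, E) ∞ M) {f : E → E} (hf : ContDiff ℝ ∞ f)
    {K : Set E} (hK : IsCompact K) (hKt : K ⊆ e.target) (hfK : EqOn f id Kᶜ)
    (hft : MapsTo f e.target e.target) : ContMDiff 𝓘(ℝ, E) 𝓘(ℝ, E) ∞ (e.conjExtend f) := by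
  intro x
  by_cases hx : x ∈ e.source
  · have hconj : ContMDiffAt 𝓘(ℝ, E) 𝓘(ℝ, E) ∞ (e.symm ∘ f ∘ e) x :=
      ((contMDiffOn_symm_of_mem_maximalAtlas he).contMDiffAt
        (e.open_target.mem_nhds (hft (e.map_source hx)))).comp x
        (hf.contMDiff.contMDiffAt.comp x
          ((contMDiffOn_of_mem_maximalAtlas he).contMDiffAt (e.open_source.mem_nhds hx)))
    refine hconj.congr_of_eventuallyEq ?_
    filter_upwards [e.open_source.mem_nhds hx] with y hy using conjExtend_of_mem hy
  · have hclosed : IsClosed (e.symm '' K) :=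
      (hK.image_of_continuousOn (e.continuousOn_symm.mono hKt)).isClosed
    have hxK : x ∉ e.symm '' K := fun ⟨z, hz, hzx⟩ => hx (hzx ▸ e.map_target (hKt hz))
    exact contMDiffAt_id.congr_of_eventuallyEq
      (mem_of_superset (hclosed.isOpen_compl.mem_nhds hxK) (eqOn_conjExtend_compl hfK))

theorem exists_diffeomorph_coe_eq_conjExtend [T2Space M] {e : OpenPartialHomeomorph M E}
    (he : e ∈ IsManifold.maximalAtlas 𝓘(ℝ, E) ∞ M) (f : E ≃ₘ[ℝ] E) {K : Set E}
    (hK : IsCompact K) (hKt : K ⊆ e.target) (hfK : EqOn f id Kᶜ) :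
    ∃ Φ : M ≃ₘ⟮𝓘(ℝ, E), 𝓘(ℝ, E)⟯ M, ⇑Φ = e.conjExtend f := by
  have hf_symm : EqOn f.symm id Kᶜ := fun z hz => by
    simpa using congrArg f.symm (hfK hz).symm
  have hft := f.injective.mapsTo_of_eqOn_compl hKt hfK
  have hft_symm := f.symm.injective.mapsTo_of_eqOn_compl hKt hf_symm
  exact ⟨{ toFun := e.conjExtend f
           invFun := e.conjExtend f.symm
           left_inv := leftInverse_conjExtend f.symm_apply_apply hft
           right_inv := leftInverse_conjExtend f.apply_symm_apply hft_symm
           contMDiff_toFun := contMDiff_conjExtend he f.contDiff hK hKt hfK hft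
           contMDiff_invFun := contMDiff_conjExtend he f.symm.contDiff hK hKt hf_symm hft_symm },
    rfl⟩

/-- `ψ` is a diffeomorphism of the model space onto the open set `range ψ`, with inverse `φ`. -/
structure IsCellChart (ψ : E → M) (φ : M → E) : Prop where
  isOpen_range : IsOpen (range ψ)
  leftInverse : LeftInverse φ ψ
  contMDiff : ContMDiff 𝓘(ℝ, E) 𝓘(ℝ, E) ∞ ψ
  contMDiffOn : ContMDiffOn 𝓘(ℝ, E) 𝓘(ℝ, E) ∞ φ (range ψ)

namespace IsCellChart

variable {ψ : E → M} {φ : M → E}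

theorem rightInvOn (h : IsCellChart ψ φ) : RightInvOn φ ψ (range ψ) :=
  h.leftInverse.rightInvOn_range

theorem image_eq (h : IsCellChart ψ φ) (s : Set E) : ψ '' s = range ψ ∩ φ ⁻¹' s := by
  ext x
  constructor
  · rintro ⟨y, hy, rfl⟩
    exact ⟨mem_range_self y, by rwa [mem_preimage, h.leftInverse y]⟩
  · rintro ⟨hx, hxs⟩
    exact ⟨φ x, hxs, h.rightInvOn hx⟩

theorem isOpen_image (h : IsCellChart ψ φ) {s : Set E} (hs : IsOpen s) : IsOpen (ψ '' s) :=
  h.image_eq s ▸ h.contMDiffOn.continuousOn.isOpen_inter_preimage h.isOpen_range hs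

theorem diffeomorph_comp (h : IsCellChart ψ φ) (Φ : M ≃ₘ⟮𝓘(ℝ, E), 𝓘(ℝ, E)⟯ M) :
    IsCellChart (Φ ∘ ψ) (φ ∘ Φ.symm) where
  isOpen_range := by
    rw [range_comp]
    exact Φ.toHomeomorph.isOpenMap _ h.isOpen_range
  leftInverse y := by simp [h.leftInverse y]
  contMDiff := Φ.contMDiff.comp h.contMDiff
  contMDiffOn := by
    refine h.contMDiffOn.comp Φ.symm.contMDiff.contMDiffOn ?_
    rintro _ ⟨y, rfl⟩
    simp

theorem comp_diffeomorph (h : IsCellChart ψ φ) (g : E ≃ₘ[ℝ] E) :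
    IsCellChart (ψ ∘ g.symm) (g ∘ φ) where
  isOpen_range := g.symm.surjective.range_comp ψ ▸ h.isOpen_range
  leftInverse y := by simp [h.leftInverse (g.symm y)]
  contMDiff := h.contMDiff.comp g.symm.contMDiff
  contMDiffOn := g.symm.surjective.range_comp ψ ▸ g.contMDiff.comp_contMDiffOn h.contMDiffOn

theorem exists_mapsTo_ball_one (h : IsCellChart ψ φ) {S : Set M} (hS : S.Finite) :
    ∃ (ψ' : E → M) (φ' : M → E), IsCellChart ψ' φ' ∧ range ψ' = range ψ ∧
      MapsTo φ' S (ball 0 1) := by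
  obtain ⟨R, hR, hSR⟩ := (hS.image φ).isBounded.subset_ball_lt 0 0
  let g : E ≃ₘ[ℝ] E :=
    (ContinuousLinearEquiv.smulLeft (R₁ := ℝ) (Units.mk0 R⁻¹ (by positivity))).toDiffeomorph
  refine ⟨ψ ∘ g.symm, g ∘ φ, h.comp_diffeomorph g, g.symm.surjective.range_comp ψ,
    fun s hs => ?_⟩
  have hs' : ‖φ s‖ < R := by simpa using hSR (mem_image_of_mem φ hs)
  have hgs : g (φ s) = R⁻¹ • φ s := by simp [g, Units.smul_def]
  rw [mem_ball_zero_iff, comp_apply, hgs, norm_smul, norm_inv, Real.norm_of_nonneg hR.le]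
  exact (inv_mul_lt_one₀ hR).2 hs'

end IsCellChart

end

section

open OpenPartialHomeomorph

variable {E : Type*} [NormedAddCommGroup E] [InnerProductSpace ℝ E]

theorem eventually_exists_diffeomorph_apply_eq [FiniteDimensional ℝ E] (a : E) {r : ℝ}
    (hr : 0 < r) :
    ∀ᶠ b in 𝓝 a, ∃ f : E ≃ₘ[ℝ] E, f a = b ∧ EqOn f id (ball a r)ᶜ := by
  let bump : ContDiffBump a := ⟨r / 2, r, by positivity, by linarith⟩
  obtain ⟨K, hK⟩ := (bump.contDiff (n := ⊤)).lipschitzWith_of_hasCompactSupport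
    bump.hasCompactSupport (by simp)
  have hsmall : ∀ᶠ b in 𝓝 a, ‖b - a‖₊ * K < 1 :=
    ((by fun_prop : Continuous fun b => ‖b - a‖₊ * K).tendsto' a 0 (by simp)).eventually_lt_const
      zero_lt_one
  filter_upwards [hsmall] with b hb
  obtain ⟨f, hf⟩ := exists_diffeomorph_coe_eq_add_smul bump.contDiff hK hb
  refine ⟨f, ?_, fun x hx => ?_⟩
  · simp [hf, bump.one_of_mem_closedBall (mem_closedBall_self (by positivity))]
  · have : bump x = 0 := notMem_support.1 (bump.support_eq ▸ hx)
    simp [hf, this]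

variable {M : Type*} [TopologicalSpace M] [ChartedSpace E M] [IsManifold 𝓘(ℝ, E) ∞ M]

theorem eventually_exists_diffeomorph_apply_eq_of_mem_nhds [FiniteDimensional ℝ E] [T2Space M]
    {p : M} {W : Set M} (hW : W ∈ 𝓝 p) :
    ∀ᶠ q in 𝓝 p, ∃ Φ : M ≃ₘ⟮𝓘(ℝ, E), 𝓘(ℝ, E)⟯ M, Φ p = q ∧ EqOn Φ id Wᶜ := by
  set e := chartAt E p
  have hp : p ∈ e.source := mem_chart_source E p
  have hN : e.target ∩ e.symm ⁻¹' W ∈ 𝓝 (e p) :=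
    inter_mem (e.open_target.mem_nhds (e.map_source hp))
      ((e.continuousAt_symm (e.map_source hp)).preimage_mem_nhds (by rwa [e.left_inv hp]))
  obtain ⟨r, hr, hrN⟩ := nhds_basis_closedBall.mem_iff.1 hN
  filter_upwards [(e.continuousAt hp).eventually (eventually_exists_diffeomorph_apply_eq (e p) hr),
    e.open_source.mem_nhds hp] with q ⟨f, hfq, hf⟩ hq
  have hfK : EqOn f id (closedBall (e p) r)ᶜ :=
    hf.mono (compl_subset_compl.2 ball_subset_closedBall)
  obtain ⟨Φ, hΦ⟩ := exists_diffeomorph_coe_eq_conjExtend (IsManifold.chart_mem_maximalAtlas p) f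
    (isCompact_closedBall _ _) (fun z hz => (hrN hz).1) hfK
  refine ⟨Φ, ?_, ?_⟩
  · rw [hΦ, conjExtend_of_mem hp, hfq, e.left_inv hq]
  · rw [hΦ]
    exact (eqOn_conjExtend_compl hfK).mono
      (compl_subset_compl.2 (image_subset_iff.2 fun z hz => (hrN hz).2))

theorem exists_isCellChart_mem (p : M) :
    ∃ (ψ : E → M) (φ : M → E), IsCellChart ψ φ ∧ p ∈ range ψ := by
  set e := chartAt E p
  have hp : p ∈ e.source := mem_chart_source E p
  obtain ⟨r, hr, hball⟩ := isOpen_iff.1 e.open_target (e p) (e.map_source hp)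
  set u := univBall (e p) r
  have hu : ∀ y, u y ∈ ball (e p) r := fun y => by
    rw [← univBall_target (e p) hr]
    exact u.map_source (by simp [u])
  have hrange : range (e.symm ∘ u) = e.symm '' ball (e p) r := by
    rw [range_comp, ← univBall_target (e p) hr, ← u.image_source_eq_target, univBall_source,
      image_univ]
  refine ⟨e.symm ∘ u, u.symm ∘ e, ⟨?_, fun y => ?_, fun y => ?_, ?_⟩, ?_⟩
  · exact hrange ▸ e.isOpen_image_symm_of_subset_target isOpen_ball hball
  · change u.symm (e (e.symm (u y))) = y
    rw [e.right_inv (hball (hu y)), u.left_inv (by simp [u])]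
  · exact (contMDiffOn_chart_symm.contMDiffAt (e.open_target.mem_nhds (hball (hu y)))).comp y
      contDiff_univBall.contMDiff.contMDiffAt
  · rw [hrange]
    refine contDiffOn_univBall_symm.contMDiffOn.comp
      (contMDiffOn_chart.mono fun x hx => ?_) fun x hx => ?_
    · obtain ⟨z, hz, rfl⟩ := hx
      exact e.map_target (hball hz)
    · obtain ⟨z, hz, rfl⟩ := hx
      simpa [e.right_inv (hball hz)] using hz
  · refine ⟨u.symm (e p), ?_⟩
    change e.symm (u (u.symm (e p))) = p
    rw [u.right_inv (by simpa [u, univBall_target _ hr] using hr), e.left_inv hp]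

theorem isLocallyConstant_exists_isCellChart_insert [FiniteDimensional ℝ E] [T2Space M]
    {T : Set M} (hT : T.Finite) :
    IsLocallyConstant fun x =>
      ∃ (ψ : E → M) (φ : M → E), IsCellChart ψ φ ∧ insert x T ⊆ range ψ := by
  refine (IsLocallyConstant.iff_eventually_eq _).2 fun x => ?_
  by_cases hx : ∃ (ψ : E → M) (φ : M → E), IsCellChart ψ φ ∧ insert x T ⊆ range ψ
  · obtain ⟨ψ, φ, h, hxT⟩ := hx
    filter_upwards [h.isOpen_range.mem_nhds (hxT (mem_insert x T))] with q hq
    exact propext (iff_of_true ⟨ψ, φ, h, insert_subset hq ((subset_insert x T).trans hxT)⟩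
      ⟨ψ, φ, h, hxT⟩)
  · -- a cell containing `insert q T` is pulled back to one containing `insert x T` by a
    -- diffeomorphism sending `x` to `q` and fixing `T \ {x}`
    have hW : (T \ {x})ᶜ ∈ 𝓝 x :=
      (hT.subset sdiff_subset).isClosed.isOpen_compl.mem_nhds fun h => h.2 rfl
    filter_upwards [eventually_exists_diffeomorph_apply_eq_of_mem_nhds (E := E) hW]
      with q ⟨Φ, hΦx, hΦT⟩
    refine propext (iff_of_false ?_ hx)
    rintro ⟨ψ, φ, h, hqT⟩
    refine hx ⟨Φ.symm ∘ ψ, φ ∘ Φ, h.diffeomorph_comp Φ.symm, ?_⟩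
    rw [range_comp, Φ.symm_image_eq_preimage]
    intro y hy
    by_cases hyx : y = x
    · rw [mem_preimage, hyx, hΦx]
      exact hqT (mem_insert q T)
    · have hyT : y ∈ T := hy.resolve_left hyx
      rw [mem_preimage, hΦT fun h => h ⟨hyT, hyx⟩]
      exact hqT (mem_insert_of_mem q hyT)

theorem exists_isCellChart_superset [FiniteDimensional ℝ E] [T2Space M] [ConnectedSpace M]
    {S : Set M} (hS : S.Finite) : ∃ (ψ : E → M) (φ : M → E), IsCellChart ψ φ ∧ S ⊆ range ψ := by
  induction S, hS using Set.Finite.induction_on with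
  | empty =>
    obtain ⟨ψ, φ, h, -⟩ := exists_isCellChart_mem (E := E) (Classical.arbitrary M)
    exact ⟨ψ, φ, h, empty_subset _⟩
  | @insert p T _ hT ih =>
    obtain ⟨ψ, φ, h, hTψ⟩ := ih
    have hconst := (isLocallyConstant_exists_isCellChart_insert (E := E) hT
      ).apply_eq_of_preconnectedSpace (ψ 0) p
    exact cast hconst ⟨ψ, φ, h, insert_subset (mem_range_self 0) hTψ⟩

end

theorem exists_ball_like_compact_set_containing_finite_set_general {n : ℕ}
    {M : Type*} [TopologicalSpace M] [T2Space M]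
    [ChartedSpace (EuclideanSpace ℝ (Fin n)) M] [IsManifold (𝓡 n) (⊤ : ℕ∞) M]
    [ConnectedSpace M]
    (S : Set M) (hS : S.Finite) :
    ∃ B : Set M, IsCompact B ∧ S ⊆ interior B ∧
      ∃ (F : M → EuclideanSpace ℝ (Fin n)) (G : EuclideanSpace ℝ (Fin n) → M),
        ContMDiffOn (𝓡 n) (𝓡 n) (⊤ : ℕ∞) F B ∧
        ContMDiffOn (𝓡 n) (𝓡 n) (⊤ : ℕ∞) G (closedBall 0 1) ∧
        F '' B = closedBall 0 1 ∧
        (∀ x ∈ B, G (F x) = x) ∧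
        (∀ y ∈ closedBall (0 : EuclideanSpace ℝ (Fin n)) 1, F (G y) = y) := by
  obtain ⟨ψ₀, φ₀, h₀, hSU⟩ := exists_isCellChart_superset (E := EuclideanSpace ℝ (Fin n)) hS
  obtain ⟨ψ, φ, h, hrange, hSball⟩ := h₀.exists_mapsTo_ball_one hS
  have hS_image : S ⊆ ψ '' ball 0 1 := fun s hs =>
    ⟨φ s, hSball hs, h.rightInvOn (hrange ▸ hSU hs)⟩
  refine ⟨ψ '' closedBall 0 1, (isCompact_closedBall 0 1).image h.contMDiff.continuous,
    hS_image.trans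
      (interior_maximal (image_mono ball_subset_closedBall) (h.isOpen_image isOpen_ball)),
    φ, ψ, h.contMDiffOn.mono (image_subset_range _ _), h.contMDiff.contMDiffOn,
    h.leftInverse.image_image _, ?_, fun y _ => h.leftInverse y⟩
  rintro _ ⟨y, -, rfl⟩
  rw [h.leftInverse y]

/-- Let `M` be a connected smooth `n`-dimensional manifold (`n ≥ 1`, without boundary) and let
`S ⊆ M` be a finite set of points.  Then there is a compact set `B ⊆ M`, diffeomorphic to the
closed unit ball of `ℝⁿ`, whose interior contains `S`.  The diffeomorphism is recorded by a pair
of maps `F : M → ℝⁿ` and `G : ℝⁿ → M`, smooth on `B` and on the closed unit ball respectively,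
which are mutually inverse bijections between `B` and the closed unit ball. -/
theorem exists_ball_like_compact_set_containing_finite_set {n : ℕ} (hn : 0 < n)
    {M : Type*} [TopologicalSpace M] [T2Space M]
    [ChartedSpace (EuclideanSpace ℝ (Fin n)) M] [IsManifold (𝓡 n) (⊤ : ℕ∞) M]
    [ConnectedSpace M]
    (S : Set M) (hS : S.Finite) :
    ∃ B : Set M, IsCompact B ∧ S ⊆ interior B ∧
      ∃ (F : M → EuclideanSpace ℝ (Fin n)) (G : EuclideanSpace ℝ (Fin n) → M),
        ContMDiffOn (𝓡 n) (𝓡 n) (⊤ : ℕ∞) F B ∧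
        ContMDiffOn (𝓡 n) (𝓡 n) (⊤ : ℕ∞) G (closedBall 0 1) ∧
        F '' B = closedBall 0 1 ∧
        (∀ x ∈ B, G (F x) = x) ∧
        (∀ y ∈ closedBall (0 : EuclideanSpace ℝ (Fin n)) 1, F (G y) = y) :=
  exists_ball_like_compact_set_containing_finite_set_general S hS
end
end

section
/- Let f, g : Sⁿ → Sⁿ be continuous self-maps of the n-sphere that both send a fixed basepoint p ∈ Sⁿ to a fixed point q ∈ Sⁿ. If deg(f) = deg(g), then f and g are homotopic through maps sending p to q. -/
/-!
A free homotopy `H` from `f` to `g` drags the basepoint around the loop `c t = H (t, p)` at `q`.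
Lift `c` to a path `W` of rotations with `W 0 = 1` and `W t (c t) = q`: over a short time `c` never
reaches the antipode of where it was, so a product of two reflections rotates it back. Then
`(t, x) ↦ W t (H (t, x))` is a based homotopy from `f` to `W 1 ∘ g`. The rotation `W 1` fixes `q`,
and the rotations fixing `q` form the connected group `SO(qᗮ)`, so a path from `W 1` to `1` among
them is a based homotopy from `W 1 ∘ g` to `g`. Connectedness of `SO(V)` is proved by the same
lifting: a rotation `A` is joined to one fixing a unit vector `w` of `V` by lifting a path from
`w` to `A w` in the sphere of `V`, which lowers the dimension.
-/

open Metric Module Submodule RealInnerProductSpace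

noncomputable section

variable {E : Type*} [NormedAddCommGroup E] [InnerProductSpace ℝ E]

/-- Sends `x` to `-x` and then, when `‖x‖ = ‖y‖`, `-x` to `y`. -/
def rotateTo (x y : E) : E →L[ℝ] E :=
  (reflection (ℝ ∙ (x + y))ᗮ : E →L[ℝ] E) * (reflection (ℝ ∙ x)ᗮ : E →L[ℝ] E)

theorem rotateTo_apply (x y v : E) :
    rotateTo x y v = reflection (ℝ ∙ (x + y))ᗮ (reflection (ℝ ∙ x)ᗮ v) :=
  rfl

@[simp]
theorem rotateTo_self (x : E) : rotateTo x x = 1 := by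
  ext v
  have h : (ℝ ∙ (x + x)) = ℝ ∙ x := by
    rw [← two_smul ℝ x, span_singleton_smul_eq (isUnit_iff_ne_zero.2 two_ne_zero)]
  simp only [rotateTo_apply, h, reflection_reflection, one_apply_eq_self]

theorem rotateTo_apply_self {x y : E} (h : ‖x‖ = ‖y‖) : rotateTo x y x = y := by
  have hspan : (ℝ ∙ (x + y)) = ℝ ∙ (-x - y) := by
    rw [show -x - y = (-1 : ℝ) • (x + y) by module,
      span_singleton_smul_eq (isUnit_iff_ne_zero.2 (by norm_num))]
  simp only [rotateTo_apply, reflection_orthogonalComplement_singleton_eq_neg, hspan]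
  exact reflection_sub (by rwa [norm_neg])

theorem rotateTo_apply_of_inner_eq_zero {x y v : E} (hx : ⟪x, v⟫ = 0) (hy : ⟪y, v⟫ = 0) :
    rotateTo x y v = v := by
  have hxy : ⟪x + y, v⟫ = 0 := by rw [inner_add_left, hx, hy, add_zero]
  rw [rotateTo_apply,
    reflection_mem_subspace_eq_self (mem_orthogonal_singleton_iff_inner_right.2 hx),
    reflection_mem_subspace_eq_self (mem_orthogonal_singleton_iff_inner_right.2 hxy)]

@[simp]
theorem norm_rotateTo_apply (x y v : E) : ‖rotateTo x y v‖ = ‖v‖ := by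
  simp only [rotateTo_apply, LinearIsometryEquiv.norm_map]

theorem det_rotateTo [FiniteDimensional ℝ E] {x y : E} (hx : x ≠ 0) (hxy : x + y ≠ 0) :
    (rotateTo x y).det = 1 := by
  have h : (rotateTo x y : E →ₗ[ℝ] E) =
      (reflection (ℝ ∙ (x + y))ᗮ).toLinearMap ∘ₗ (reflection (ℝ ∙ x)ᗮ).toLinearMap := rfl
  rw [ContinuousLinearMap.det, h, LinearMap.det_comp, det_reflection, det_reflection,
    orthogonal_orthogonal, orthogonal_orthogonal, finrank_span_singleton hx,
    finrank_span_singleton hxy]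
  norm_num

theorem reflection_orthogonal_singleton_apply (u v : E) :
    reflection (ℝ ∙ u)ᗮ v = v - (2 * ⟪u, v⟫ / ‖u‖ ^ 2) • u := by
  rw [reflection_orthogonal_apply, reflection_singleton_apply]
  simp only [RCLike.ofReal_real_eq_id, id_eq]
  module

theorem Continuous.reflection_orthogonal_singleton [FiniteDimensional ℝ E] {X : Type*}
    [TopologicalSpace X] {u : X → E} (hu : Continuous u) (h0 : ∀ s, u s ≠ 0) :
    Continuous fun s => (reflection (ℝ ∙ u s)ᗮ : E →L[ℝ] E) := by
  refine continuous_clm_apply.2 fun v => ?_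
  show Continuous fun s => reflection (ℝ ∙ u s)ᗮ v
  simp only [reflection_orthogonal_singleton_apply]
  have := fun s => pow_ne_zero 2 (norm_ne_zero_iff.2 (h0 s))
  fun_prop (disch := exact this)

theorem Continuous.rotateTo [FiniteDimensional ℝ E] {X : Type*} [TopologicalSpace X]
    {x y : X → E} (hx : Continuous x) (hy : Continuous y) (hx0 : ∀ s, x s ≠ 0)
    (hxy : ∀ s, x s + y s ≠ 0) : Continuous fun s => _root_.rotateTo (x s) (y s) :=
  ((hx.add hy).reflection_orthogonal_singleton hxy).mul (hx.reflection_orthogonal_singleton hx0)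

/-- `SO(Fᗮ)`, realised as the rotations of `E` that fix `F` pointwise. -/
def rotationsFixing (F : Submodule ℝ E) : Submonoid (E →L[ℝ] E) where
  carrier := {A | (∀ v, ‖A v‖ = ‖v‖) ∧ A.det = 1 ∧ ∀ v ∈ F, A v = v}
  mul_mem' {A B} hA hB := by
    refine ⟨fun v => ?_, ?_, fun v hv => ?_⟩
    · simp only [mul_apply_eq_comp, hA.1, hB.1]
    · have hdet : A.det * B.det = 1 := by rw [hA.2.1, hB.2.1, one_mul]
      rwa [ContinuousLinearMap.det, ContinuousLinearMap.toLinearMap_mul, map_mul]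
    · simp [hA.2.2 v hv, hB.2.2 v hv]
  one_mem' := ⟨fun _ => rfl, LinearMap.det_id, fun _ _ => rfl⟩

theorem rotationsFixing_anti {F G : Submodule ℝ E} (h : F ≤ G) :
    rotationsFixing G ≤ rotationsFixing F :=
  fun _ hA => ⟨hA.1, hA.2.1, fun v hv => hA.2.2 v (h hv)⟩

theorem rotateTo_mem_rotationsFixing [FiniteDimensional ℝ E] {F : Submodule ℝ E} {x y : E}
    (hx : x ∈ Fᗮ) (hy : y ∈ Fᗮ) (hx0 : x ≠ 0) (hxy : x + y ≠ 0) :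
    rotateTo x y ∈ rotationsFixing F :=
  ⟨norm_rotateTo_apply x y, det_rotateTo hx0 hxy, fun _ hv =>
    rotateTo_apply_of_inner_eq_zero (inner_left_of_mem_orthogonal hv hx)
      (inner_left_of_mem_orthogonal hv hy)⟩

theorem mem_rotationsFixing_sup_span_singleton {F : Submodule ℝ E} {A : E →L[ℝ] E} {w : E}
    (hA : A ∈ rotationsFixing F) (hw : A w = w) : A ∈ rotationsFixing (F ⊔ ℝ ∙ w) := by
  refine ⟨hA.1, hA.2.1, fun v hv => ?_⟩
  obtain ⟨u, hu, z, hz, rfl⟩ := mem_sup.1 hv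
  obtain ⟨a, rfl⟩ := mem_span_singleton.1 hz
  rw [map_add, map_smul, hA.2.2 u hu, hw]

theorem inner_map_map_of_mem_rotationsFixing {F : Submodule ℝ E} {A : E →L[ℝ] E}
    (hA : A ∈ rotationsFixing F) (u v : E) : ⟪A u, A v⟫ = ⟪u, v⟫ :=
  LinearIsometry.inner_map_map ⟨A.toLinearMap, hA.1⟩ u v

theorem map_mem_orthogonal_of_mem_rotationsFixing {F : Submodule ℝ E} {A : E →L[ℝ] E}
    (hA : A ∈ rotationsFixing F) {v : E} (hv : v ∈ Fᗮ) : A v ∈ Fᗮ := fun u hu => by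
  rw [← hA.2.2 u hu, inner_map_map_of_mem_rotationsFixing hA]
  exact hv u hu

/-- Only `det A = 1` rules out the reflection in `F` when `Fᗮ` is a line. -/
theorem eq_one_of_mem_rotationsFixing [FiniteDimensional ℝ E] {F : Submodule ℝ E}
    {A : E →L[ℝ] E} (hA : A ∈ rotationsFixing F) (hF : finrank ℝ Fᗮ ≤ 1) : A = 1 := by
  have hcompl := (isCompl_orthogonal (K := F)).codisjoint
  suffices ∀ z ∈ Fᗮ, A z = z from
    LinearMap.ext_on_codisjoint hcompl (fun v hv => hA.2.2 v hv) this
  by_cases hbot : Fᗮ = ⊥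
  · simp [hbot]
  obtain ⟨w, hw, hw0⟩ := exists_mem_ne_zero_of_ne_bot hbot
  have hline : (ℝ ∙ w) = Fᗮ := eq_of_le_of_finrank_le ((span_singleton_le_iff_mem _ _).2 hw)
    (by rw [finrank_span_singleton hw0]; exact hF)
  obtain ⟨r, hr⟩ := mem_span_singleton.1 (hline ▸ map_mem_orthogonal_of_mem_rotationsFixing hA hw)
  have hscalar : ∀ z ∈ Fᗮ, A z = r • z := by
    intro z hz
    obtain ⟨a, rfl⟩ := mem_span_singleton.1 (hline ▸ hz)
    rw [map_smul, ← hr, smul_comm]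
  have hr1 : |r| = 1 := by
    have := hA.1 w
    rw [← hr, norm_smul, Real.norm_eq_abs] at this
    exact (mul_eq_right₀ (norm_ne_zero_iff.2 hw0)).1 this
  rcases abs_eq zero_le_one |>.1 hr1 with rfl | rfl
  · simpa using hscalar
  · have hrefl : A = (reflection F : E →L[ℝ] E) := LinearMap.ext_on_codisjoint hcompl
      (fun v hv => (hA.2.2 v hv).trans (reflection_mem_subspace_eq_self hv).symm)
      (fun z hz => (hscalar z hz).trans
        ((neg_one_smul ℝ z).trans (reflection_mem_subspace_orthogonalComplement_eq_neg hz).symm))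
    have hdet := hA.2.1
    rw [hrefl] at hdet
    have : LinearMap.det (reflection F).toLinearMap = -1 := by
      rw [det_reflection, ← hline, finrank_span_singleton hw0, pow_one]
    exact absurd (this.symm.trans hdet) (by norm_num)

/-- While `t ∈ [kδ, (k+1)δ]` the `k`-th factor rotates `c t` back to `c (kδ)`, and outside that
interval it is constant; so the product sends `c t` to `c 0` for `t ∈ [0, Nδ]` and is continuous
without any gluing. -/
def rotationLift (c : ℝ → E) (δ : ℝ) : ℕ → ℝ → E →L[ℝ] E
  | 0, _ => 1
  | N + 1, t =>
    rotationLift c δ N t * rotateTo (c (max (N * δ) (min t (↑(N + 1) * δ)))) (c (N * δ))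

section rotationLift

variable {c : ℝ → E} {δ : ℝ}

theorem abs_clamp_sub_le (hδ : 0 ≤ δ) (N : ℕ) (t : ℝ) :
    |max (N * δ) (min t (↑(N + 1) * δ)) - N * δ| ≤ δ := by
  have h₁ : (N : ℝ) * δ ≤ max (N * δ) (min t (↑(N + 1) * δ)) := le_max_left _ _
  have h₂ : max (N * δ) (min t (↑(N + 1) * δ)) ≤ N * δ + δ :=
    max_le (by linarith) ((min_le_right _ _).trans_eq (by push_cast; ring))
  rw [abs_le]
  constructor <;> linarith

theorem rotationLift_min (hδ : 0 ≤ δ) (N : ℕ) (t : ℝ) :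
    rotationLift c δ N (min t (N * δ)) = rotationLift c δ N t := by
  induction N generalizing t with
  | zero => rfl
  | succ N ih =>
    have hle : (N : ℝ) * δ ≤ ↑(N + 1) * δ := by gcongr; simp
    simp only [rotationLift, min_assoc, min_self]
    rw [← ih (min t _), ← ih t, min_assoc, min_eq_right hle]

theorem rotationLift_zero (hδ : 0 ≤ δ) (N : ℕ) : rotationLift c δ N 0 = 1 := by
  induction N with
  | zero => rfl
  | succ N ih =>
    rw [rotationLift, ih, min_eq_left (by positivity), max_eq_left (by positivity), rotateTo_self,
      one_mul]

theorem rotationLift_apply (hδ : 0 ≤ δ) (hc : ∀ s, ‖c s‖ = 1) (N : ℕ) {t : ℝ} (ht₀ : 0 ≤ t)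
    (ht : t ≤ N * δ) : rotationLift c δ N t (c t) = c 0 := by
  induction N generalizing t with
  | zero =>
    obtain rfl : t = 0 := by simp at ht; linarith
    rfl
  | succ N ih =>
    rw [rotationLift, mul_apply_eq_comp]
    rcases le_total t (N * δ) with htN | htN
    · rw [min_eq_left ht, max_eq_left htN, rotateTo_self, one_apply_eq_self, ih ht₀ htN]
    · rw [min_eq_left ht, max_eq_right htN, rotateTo_apply_self (by rw [hc, hc]),
        ← rotationLift_min hδ, min_eq_right htN, ih (by positivity) le_rfl]

theorem continuous_rotationLift [FiniteDimensional ℝ E] (hδ : 0 ≤ δ) (hc : Continuous c)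
    (hc0 : ∀ s, c s ≠ 0) (hclose : ∀ s s', |s - s'| ≤ δ → c s + c s' ≠ 0) (N : ℕ) :
    Continuous (rotationLift c δ N) := by
  induction N with
  | zero => exact continuous_const
  | succ N ih =>
    exact ih.mul (Continuous.rotateTo (by fun_prop) continuous_const (fun _ => hc0 _)
      (fun t => hclose _ _ (abs_clamp_sub_le hδ N t)))

theorem rotationLift_mem_rotationsFixing [FiniteDimensional ℝ E] {F : Submodule ℝ E}
    (hδ : 0 ≤ δ) (hcF : ∀ s, c s ∈ Fᗮ) (hc0 : ∀ s, c s ≠ 0)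
    (hclose : ∀ s s', |s - s'| ≤ δ → c s + c s' ≠ 0) (N : ℕ) (t : ℝ) :
    rotationLift c δ N t ∈ rotationsFixing F := by
  induction N with
  | zero => exact one_mem _
  | succ N ih =>
    exact mul_mem ih (rotateTo_mem_rotationsFixing (hcF _) (hcF _) (hc0 _)
      (hclose _ _ (abs_clamp_sub_le hδ N t)))

end rotationLift

theorem Path.exists_rotationsFixing_lift [FiniteDimensional ℝ E] {F : Submodule ℝ E} {x y : E}
    (γ : Path x y) (hγ : ∀ t, ‖γ t‖ = 1) (hγF : ∀ t, γ t ∈ Fᗮ) :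
    ∃ B, ∃ W : Path (1 : E →L[ℝ] E) B, ∀ t, W t ∈ rotationsFixing F ∧ W t (γ t) = x := by
  set c : ℝ → E := ⇑γ.extend
  have hc : ∀ s, ‖c s‖ = 1 := fun s => hγ _
  have hc0 : ∀ s, c s ≠ 0 := fun s => norm_ne_zero_iff.1 (by rw [hc]; exact one_ne_zero)
  obtain ⟨δ, hδ, hδc⟩ := Metric.uniformContinuous_iff.1
    ((CompactSpace.uniformContinuous_of_continuous γ.continuous).comp
      (LipschitzWith.projIcc zero_le_one).uniformContinuous) 2 two_pos
  have hclose : ∀ s s', |s - s'| ≤ δ / 2 → c s + c s' ≠ 0 := by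
    intro s s' hss' hsum
    have hdist : dist (c s) (c s') < 2 := hδc (by rw [Real.dist_eq]; linarith)
    rw [eq_neg_of_add_eq_zero_right hsum, dist_eq_norm, sub_neg_eq_add, ← two_smul ℝ, norm_smul,
      hc] at hdist
    norm_num at hdist
  obtain ⟨N, hN⟩ := exists_nat_ge (2 / δ)
  have hNδ : 1 ≤ N * (δ / 2) := by
    rw [div_le_iff₀ hδ] at hN
    linarith
  have hδ2 : 0 ≤ δ / 2 := by positivity
  refine ⟨_, ⟨⟨fun t => rotationLift c (δ / 2) N t,
    (continuous_rotationLift hδ2 γ.continuous_extend hc0 hclose N).comp continuous_subtype_val⟩,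
    rotationLift_zero hδ2 N, rfl⟩, fun t => ⟨?_, ?_⟩⟩
  · exact rotationLift_mem_rotationsFixing hδ2 (fun s => hγF _) hc0 hclose N t
  · have := rotationLift_apply hδ2 hc N t.2.1 (t.2.2.trans hNδ)
    rwa [show c t = γ t from γ.extend_extends' t, show c 0 = x from γ.extend_zero] at this

theorem isPathConnected_sphere_inter_submodule {V : Submodule ℝ E} (hV : 1 < Module.rank ℝ V)
    {r : ℝ} (hr : 0 ≤ r) : IsPathConnected (sphere (0 : E) r ∩ V) := by
  convert (isPathConnected_sphere hV (0 : V) hr).image continuous_subtype_val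
  ext x
  simp [and_comm]

theorem joinedIn_rotationsFixing_one [FiniteDimensional ℝ E] {F : Submodule ℝ E}
    {A : E →L[ℝ] E} (hA : A ∈ rotationsFixing F) : JoinedIn (rotationsFixing F) A 1 := by
  induction hk : finrank ℝ Fᗮ using Nat.strong_induction_on generalizing F A with
  | _ k ih =>
  by_cases hF : finrank ℝ Fᗮ ≤ 1
  · rw [eq_one_of_mem_rotationsFixing hA hF]
    exact JoinedIn.refl (one_mem _)
  have : Nontrivial Fᗮ := Module.nontrivial_of_finrank_pos (R := ℝ) (by omega)
  obtain ⟨⟨w, hw⟩, hw1⟩ := exists_norm_eq Fᗮ zero_le_one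
  rw [coe_norm] at hw1
  have hAw : A w ∈ sphere (0 : E) 1 ∩ Fᗮ :=
    ⟨by simp [hA.1, hw1], map_mem_orthogonal_of_mem_rotationsFixing hA hw⟩
  obtain ⟨γ, hγ⟩ := (isPathConnected_sphere_inter_submodule
    (by rw [← finrank_eq_rank]; exact_mod_cast not_le.1 hF) zero_le_one).joinedIn w
    ⟨by simp [hw1], hw⟩ (A w) hAw
  obtain ⟨B, W, hW⟩ := γ.exists_rotationsFixing_lift (fun t => by simpa using (hγ t).1)
    (fun t => (hγ t).2)
  have hBA : B * A ∈ rotationsFixing (F ⊔ ℝ ∙ w) := by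
    refine mem_rotationsFixing_sup_span_singleton (mul_mem (W.target ▸ (hW 1).1) hA) ?_
    simpa using (hW 1).2
  have hlt : finrank ℝ (F ⊔ ℝ ∙ w)ᗮ < k := by
    have hwF : ¬ (ℝ ∙ w) ≤ F := fun h => norm_ne_zero_iff.1 (hw1 ▸ one_ne_zero)
      (inner_self_eq_zero.1 (hw w (h (mem_span_singleton_self w))))
    have := finrank_lt_finrank_of_lt (left_lt_sup.2 hwF)
    have := finrank_add_finrank_orthogonal F
    have := finrank_add_finrank_orthogonal (F ⊔ ℝ ∙ w)
    omega
  refine JoinedIn.trans ?_ ((ih _ hlt hBA rfl).mono (rotationsFixing_anti le_sup_left))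
  exact ⟨(W.map (continuous_mul_const A)).cast (one_mul A).symm rfl,
    fun t => mul_mem (hW t).1 hA⟩

def ContinuousMap.Homotopy.twist {X : Type*} [TopologicalSpace X] {r : ℝ}
    {f g : C(X, sphere (0 : E) r)} (H : f.Homotopy g) (Γ : Path (1 : E →L[ℝ] E) 1)
    (hΓ : ∀ t v, ‖Γ t v‖ = ‖v‖) : f.Homotopy g where
  toFun p := ⟨Γ p.1 (H p), by simp [hΓ]⟩
  continuous_toFun := by fun_prop
  map_zero_left x := by ext; simp
  map_one_left x := by ext; simp

theorem ContinuousMap.Homotopy.coe_twist_apply {X : Type*} [TopologicalSpace X] {r : ℝ}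
    {f g : C(X, sphere (0 : E) r)} (H : f.Homotopy g) (Γ : Path (1 : E →L[ℝ] E) 1)
    (hΓ : ∀ t v, ‖Γ t v‖ = ‖v‖) (p : unitInterval × X) :
    (H.twist Γ hΓ p : E) = Γ p.1 (H p) :=
  rfl

theorem ContinuousMap.Homotopic.exists_homotopy_apply_eq [FiniteDimensional ℝ E] {X : Type*}
    [TopologicalSpace X] {f g : C(X, sphere (0 : E) 1)} (hfg : f.Homotopic g) {p : X}
    {q : sphere (0 : E) 1} (hf : f p = q) (hg : g p = q) :
    ∃ H : f.Homotopy g, ∀ t, H (t, p) = q := by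
  obtain ⟨H⟩ := hfg
  obtain ⟨B, W, hW⟩ := ((H.evalAt p).map continuous_subtype_val).exists_rotationsFixing_lift
    (F := ⊥) (fun t => by simp) (fun t => by simp)
  have hBq : B q = q := by
    have := (hW 1).2
    simp only [Path.map_coe, Function.comp_apply, ContinuousMap.Homotopy.evalAt_apply] at this
    rwa [W.target, H.apply_one, hg, hf] at this
  have hB : B ∈ rotationsFixing (ℝ ∙ (q : E)) := by
    have := mem_rotationsFixing_sup_span_singleton (W.target ▸ (hW 1).1) hBq
    rwa [bot_sup_eq] at this
  obtain ⟨D, hD⟩ := joinedIn_rotationsFixing_one hB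
  refine ⟨(H.trans (.refl g)).twist (W.trans D) fun t v => ?_, fun t => Subtype.ext ?_⟩
  · rw [Path.trans_apply]
    split_ifs
    exacts [(hW _).1.1 v, (hD _).1 v]
  · rw [ContinuousMap.Homotopy.coe_twist_apply, Path.trans_apply,
      ContinuousMap.Homotopy.trans_apply]
    split_ifs
    · simpa [hf] using (hW _).2
    · simpa [hg] using (hD _).2.2 q (mem_span_singleton_self _)

end

/-- If two continuous self-maps `f, g` of the `n`-sphere send a fixed basepoint `p` to a fixed
point `q` and have the same degree (where the degree is the integer classifying the homotopy
class of a self-map of the sphere, i.e. two self-maps are homotopic iff they have the same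
degree), then `f` and `g` are homotopic through maps sending `p` to `q`. -/
theorem homotopic_rel_basepoint_of_deg_eq {n : ℕ}
    -- `deg` is the degree: the integer classifying the homotopy class of a self-map of `Sⁿ`
    (deg : C(sphere (0 : EuclideanSpace ℝ (Fin (n + 1))) 1,
      sphere (0 : EuclideanSpace ℝ (Fin (n + 1))) 1) → ℤ)
    (hdeg : ∀ f g : C(sphere (0 : EuclideanSpace ℝ (Fin (n + 1))) 1,
      sphere (0 : EuclideanSpace ℝ (Fin (n + 1))) 1), f.Homotopic g ↔ deg f = deg g)
    (f g : C(sphere (0 : EuclideanSpace ℝ (Fin (n + 1))) 1,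
      sphere (0 : EuclideanSpace ℝ (Fin (n + 1))) 1))
    (p q : sphere (0 : EuclideanSpace ℝ (Fin (n + 1))) 1)
    (hf : f p = q) (hg : g p = q) (h : deg f = deg g) :
    ∃ H : f.Homotopy g, ∀ t : unitInterval, H (t, p) = q :=
  ((hdeg f g).2 h).exists_homotopy_apply_eq hf hg
end
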